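/- Assume u₀ : ℝ² → ℝ is C² with u₀, ∇u₀ and all second derivatives of u₀ bounded on S, and suppose |k(s)| ≤ K₀ and 0 < m ≤ h(s) ≤ M for all s ∈ I, and λ₀ ≥ 0. Then there exists a constant C₁₂ > 0 (depending only on K₀, m, M, λ₀, u₀ and S) such that for every ε > 0, every w ∈ C_c^∞(I°), and every η ∈ C_c^∞(I° × S): | ∫_{I×S} (1/ε)·k(s)h(s)·⟨z_α(s), y⟩·w(s)·( ⟨∇u₀(y), ∇_y η(s,y)⟩/h(s)² − λ₀·u₀(y)η(s,y)/M² ) dy ds | ≤ (C₁₂/ε)·( ∫_I w(s)² ds )^{1/2}·( ∫_{I×S} η(s,y)² dy ds )^{1/2}. -/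

import Mathlib

open MeasureTheory Set

/-- Partial derivative in the longitudinal variable `s` of a function on `ℝ × ℝ²`. -/
noncomputable def ds (v : ℝ × ℝ × ℝ → ℝ) (p : ℝ × ℝ × ℝ) : ℝ :=
  deriv (fun t => v (t, p.2)) p.1

/-- Partial derivative in the transverse variable `y₁`. -/
noncomputable def d1 (v : ℝ × ℝ × ℝ → ℝ) (p : ℝ × ℝ × ℝ) : ℝ :=
  deriv (fun t => v (p.1, t, p.2.2)) p.2.1

/-- Partial derivative in the transverse variable `y₂`. -/
noncomputable def d2 (v : ℝ × ℝ × ℝ → ℝ) (p : ℝ × ℝ × ℝ) : ℝ :=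
  deriv (fun t => v (p.1, p.2.1, t)) p.2.2

/-- First partial derivative of a function on `ℝ²`. -/
noncomputable def pd1 (v : ℝ × ℝ → ℝ) (y : ℝ × ℝ) : ℝ := deriv (fun t => v (t, y.2)) y.1

/-- Second partial derivative of a function on `ℝ²`. -/
noncomputable def pd2 (v : ℝ × ℝ → ℝ) (y : ℝ × ℝ) : ℝ := deriv (fun t => v (y.1, t)) y.2

/-- The factor `β_ε(s,y) = 1 - ε h(s) k(s) ⟨z_α(s), y⟩`, with `z_α = (cos α, -sin α)`. -/
noncomputable def beta (h k α : ℝ → ℝ) (ε : ℝ) (p : ℝ × ℝ × ℝ) : ℝ :=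
  1 - ε * h p.1 * k p.1 * (Real.cos (α p.1) * p.2.1 - Real.sin (α p.1) * p.2.2)

/-- The quadratic form `g_ε` of the paper, after the changes of variables, on smooth
compactly supported functions on `I° × S`.  Here `αd` stands for `α'` and `hdh` for
`h'/h`, `R` is the rotation `R(y₁,y₂) = (-y₂,y₁)`. -/
noncomputable def gform (I : Set ℝ) (S : Set (ℝ × ℝ)) (k τ αd hdh h α : ℝ → ℝ)
    (lam0 M c ε : ℝ) (v : ℝ × ℝ × ℝ → ℝ) : ℝ :=
  ∫ p in (I ×ˢ S : Set (ℝ × ℝ × ℝ)),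
    ((ds v p - v p * hdh p.1
        + (τ p.1 + αd p.1) * (d1 v p * (-p.2.2) + d2 v p * p.2.1)
        - hdh p.1 * (d1 v p * p.2.1 + d2 v p * p.2.2)) ^ 2
      + beta h k α ε p *
          (((d1 v p) ^ 2 + (d2 v p) ^ 2) / (ε ^ 2 * (h p.1) ^ 2)
            - lam0 * (v p) ^ 2 / (ε ^ 2 * M ^ 2))
      + c * (v p) ^ 2)

lemma pd1_eq_zero_of_nmem {f : ℝ × ℝ → ℝ} {y : ℝ × ℝ} (hy : y ∉ tsupport f) :
    pd1 f y = 0 := by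
  have h0 : ∀ᶠ z in nhds y, f z = 0 := by
    have := notMem_tsupport_iff_eventuallyEq.mp hy
    filter_upwards [this] with z hz using hz
  have hc : Filter.Tendsto (fun t : ℝ => ((t, y.2) : ℝ × ℝ)) (nhds y.1) (nhds y) := by
    have : Filter.Tendsto (fun t : ℝ => ((t, y.2) : ℝ × ℝ)) (nhds y.1) (nhds (y.1, y.2)) :=
      (continuous_id.prodMk continuous_const).continuousAt
    simpa using this
  have h1 : (fun t => f (t, y.2)) =ᶠ[nhds y.1] (fun _ => (0 : ℝ)) := hc.eventually h0
  unfold pd1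
  rw [h1.deriv_eq]
  simp

lemma pd2_eq_zero_of_nmem {f : ℝ × ℝ → ℝ} {y : ℝ × ℝ} (hy : y ∉ tsupport f) :
    pd2 f y = 0 := by
  have h0 : ∀ᶠ z in nhds y, f z = 0 := by
    have := notMem_tsupport_iff_eventuallyEq.mp hy
    filter_upwards [this] with z hz using hz
  have hc : Filter.Tendsto (fun t : ℝ => ((y.1, t) : ℝ × ℝ)) (nhds y.2) (nhds y) := by
    have : Filter.Tendsto (fun t : ℝ => ((y.1, t) : ℝ × ℝ)) (nhds y.2) (nhds (y.1, y.2)) :=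
      (continuous_const.prodMk continuous_id).continuousAt
    simpa using this
  have h1 : (fun t => f (y.1, t)) =ᶠ[nhds y.2] (fun _ => (0 : ℝ)) := hc.eventually h0
  unfold pd2
  rw [h1.deriv_eq]
  simp

lemma hasDerivAt_pd1 {f : ℝ × ℝ → ℝ} (hf : Differentiable ℝ f) (y : ℝ × ℝ) :
    HasDerivAt (fun t => f (t, y.2)) (pd1 f y) y.1 := by
  have hd : DifferentiableAt ℝ (fun t : ℝ => f (t, y.2)) y.1 :=
    (hf (y.1, y.2)).comp y.1 (differentiableAt_id.prodMk (differentiableAt_const y.2))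
  exact hd.hasDerivAt

lemma hasDerivAt_pd2 {f : ℝ × ℝ → ℝ} (hf : Differentiable ℝ f) (y : ℝ × ℝ) :
    HasDerivAt (fun t => f (y.1, t)) (pd2 f y) y.2 := by
  have hd : DifferentiableAt ℝ (fun t : ℝ => f (y.1, t)) y.2 :=
    (hf (y.1, y.2)).comp y.2 ((differentiableAt_const y.1).prodMk differentiableAt_id)
  exact hd.hasDerivAt

lemma pd1_eq_fderiv {f : ℝ × ℝ → ℝ} (hf : Differentiable ℝ f) (y : ℝ × ℝ) :
    pd1 f y = fderiv ℝ f y (1, 0) := by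
  have hg : HasDerivAt (fun t : ℝ => ((t, y.2) : ℝ × ℝ)) ((1 : ℝ), (0 : ℝ)) y.1 :=
    (hasDerivAt_id y.1).prodMk (hasDerivAt_const y.1 y.2)
  have h2 : HasDerivAt (fun t => f (t, y.2)) (fderiv ℝ f y (1, 0)) y.1 :=
    (hf y).hasFDerivAt.comp_hasDerivAt y.1 hg
  exact (hasDerivAt_pd1 hf y).unique h2

lemma pd2_eq_fderiv {f : ℝ × ℝ → ℝ} (hf : Differentiable ℝ f) (y : ℝ × ℝ) :
    pd2 f y = fderiv ℝ f y (0, 1) := by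
  have hg : HasDerivAt (fun t : ℝ => ((y.1, t) : ℝ × ℝ)) ((0 : ℝ), (1 : ℝ)) y.2 :=
    (hasDerivAt_const y.2 y.1).prodMk (hasDerivAt_id y.2)
  have h2 : HasDerivAt (fun t => f (y.1, t)) (fderiv ℝ f y (0, 1)) y.2 :=
    (hf y).hasFDerivAt.comp_hasDerivAt y.2 hg
  exact (hasDerivAt_pd2 hf y).unique h2

lemma continuous_pd1 {f : ℝ × ℝ → ℝ} (hf : ContDiff ℝ 1 f) : Continuous (pd1 f) := by
  have he : pd1 f = fun y => fderiv ℝ f y (1, 0) :=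
    funext fun y => pd1_eq_fderiv (hf.differentiable one_ne_zero) y
  rw [he]
  exact (hf.continuous_fderiv one_ne_zero).clm_apply continuous_const

lemma continuous_pd2 {f : ℝ × ℝ → ℝ} (hf : ContDiff ℝ 1 f) : Continuous (pd2 f) := by
  have he : pd2 f = fun y => fderiv ℝ f y (0, 1) :=
    funext fun y => pd2_eq_fderiv (hf.differentiable one_ne_zero) y
  rw [he]
  exact (hf.continuous_fderiv one_ne_zero).clm_apply continuous_const

lemma contDiff_one_pd1 {f : ℝ × ℝ → ℝ} (hf : ContDiff ℝ 2 f) : ContDiff ℝ 1 (pd1 f) := by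
  have he : pd1 f = fun y => fderiv ℝ f y (1, 0) :=
    funext fun y => pd1_eq_fderiv (hf.differentiable two_ne_zero) y
  rw [he]
  exact (hf.fderiv_right (by norm_num)).clm_apply contDiff_const

lemma contDiff_one_pd2 {f : ℝ × ℝ → ℝ} (hf : ContDiff ℝ 2 f) : ContDiff ℝ 1 (pd2 f) := by
  have he : pd2 f = fun y => fderiv ℝ f y (0, 1) :=
    funext fun y => pd2_eq_fderiv (hf.differentiable two_ne_zero) y
  rw [he]
  exact (hf.fderiv_right (by norm_num)).clm_apply contDiff_const

lemma integral_deriv_eq_zero'' {f : ℝ → ℝ} (hf : ContDiff ℝ 1 f)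
    (h2f : HasCompactSupport f) : ∫ x, deriv f x = 0 := by
  have hint : Integrable (deriv f) :=
    (hf.continuous_deriv le_rfl).integrable_of_hasCompactSupport h2f.deriv
  rw [← setIntegral_univ, ← Set.Iic_union_Ioi (a := (0 : ℝ)),
    setIntegral_union (Iic_disjoint_Ioi le_rfl) measurableSet_Ioi hint.integrableOn
      hint.integrableOn,
    h2f.integral_Iic_deriv_eq hf 0, h2f.integral_Ioi_deriv_eq hf 0]
  ring

lemma integral_pd1_eq_zero {φ : ℝ × ℝ → ℝ} (hφ : ContDiff ℝ 1 φ)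
    (h2 : HasCompactSupport φ) : ∫ y, pd1 φ y = 0 := by
  have hcont : Continuous (pd1 φ) := continuous_pd1 hφ
  have hcs : HasCompactSupport (pd1 φ) :=
    HasCompactSupport.intro h2 fun y hy => pd1_eq_zero_of_nmem hy
  have hint : Integrable (pd1 φ) := hcont.integrable_of_hasCompactSupport hcs
  rw [Measure.volume_eq_prod] at hint ⊢
  rw [integral_prod_symm _ hint]
  have inner : ∀ b : ℝ, (∫ x : ℝ, pd1 φ (x, b)) = 0 := by
    intro b
    have hψ : ContDiff ℝ 1 (fun t : ℝ => φ (t, b)) := hφ.comp (contDiff_id.prodMk contDiff_const)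
    have hψc : HasCompactSupport (fun t : ℝ => φ (t, b)) := by
      apply HasCompactSupport.intro (h2.image continuous_fst)
      intro x hx
      apply image_eq_zero_of_notMem_tsupport
      intro hmem
      exact hx ⟨(x, b), hmem, rfl⟩
    exact integral_deriv_eq_zero'' hψ hψc
  simp only [inner, integral_zero]

lemma integral_pd2_eq_zero {φ : ℝ × ℝ → ℝ} (hφ : ContDiff ℝ 1 φ)
    (h2 : HasCompactSupport φ) : ∫ y, pd2 φ y = 0 := by
  have hcont : Continuous (pd2 φ) := continuous_pd2 hφ
  have hcs : HasCompactSupport (pd2 φ) :=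
    HasCompactSupport.intro h2 fun y hy => pd2_eq_zero_of_nmem hy
  have hint : Integrable (pd2 φ) := hcont.integrable_of_hasCompactSupport hcs
  rw [Measure.volume_eq_prod] at hint ⊢
  rw [integral_prod _ hint]
  have inner : ∀ a : ℝ, (∫ x : ℝ, pd2 φ (a, x)) = 0 := by
    intro a
    have hψ : ContDiff ℝ 1 (fun t : ℝ => φ (a, t)) := hφ.comp (contDiff_const.prodMk contDiff_id)
    have hψc : HasCompactSupport (fun t : ℝ => φ (a, t)) := by
      apply HasCompactSupport.intro (h2.image continuous_snd)
      intro x hx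
      apply image_eq_zero_of_notMem_tsupport
      intro hmem
      exact hx ⟨(a, x), hmem, rfl⟩
    exact integral_deriv_eq_zero'' hψ hψc
  simp only [inner, integral_zero]

lemma ibp1 (S : Set (ℝ × ℝ)) {A g : ℝ × ℝ → ℝ} (hA : ContDiff ℝ 1 A)
    (hg : ContDiff ℝ 1 g) (hgc : HasCompactSupport g) (hgs : tsupport g ⊆ S) :
    ∫ y in S, A y * pd1 g y = - ∫ y in S, pd1 A y * g y := by
  have hAd : Differentiable ℝ A := hA.differentiable one_ne_zero
  have hgd : Differentiable ℝ g := hg.differentiable one_ne_zero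
  have hsplit : ∀ y : ℝ × ℝ, pd1 (fun z => A z * g z) y = pd1 A y * g y + A y * pd1 g y := by
    intro y
    exact ((hasDerivAt_pd1 hAd y).mul (hasDerivAt_pd1 hgd y)).deriv
  have hvan : ∀ y : ℝ × ℝ, y ∉ S → pd1 A y * g y + A y * pd1 g y = 0 := by
    intro y hy
    have hyn : y ∉ tsupport g := fun hmem => hy (hgs hmem)
    rw [image_eq_zero_of_notMem_tsupport hyn, pd1_eq_zero_of_nmem hyn]
    ring
  have hint1 : Integrable (fun y => A y * pd1 g y) := by
    apply (hA.continuous.mul (continuous_pd1 hg)).integrable_of_hasCompactSupport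
    apply HasCompactSupport.intro hgc
    intro y hy
    simp [pd1_eq_zero_of_nmem hy]
  have hint2 : Integrable (fun y => pd1 A y * g y) := by
    apply ((continuous_pd1 hA).mul hg.continuous).integrable_of_hasCompactSupport
    apply HasCompactSupport.intro hgc
    intro y hy
    simp [image_eq_zero_of_notMem_tsupport hy]
  have hzero : ∫ y, pd1 (fun z => A z * g z) y = 0 :=
    integral_pd1_eq_zero (hA.mul hg) hgc.mul_left
  have hsum : ∫ y in S, (pd1 A y * g y + A y * pd1 g y) = 0 := by
    rw [setIntegral_eq_integral_of_forall_compl_eq_zero hvan, ← hzero]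
    exact integral_congr_ae (Filter.Eventually.of_forall fun y => (hsplit y).symm)
  have hadd : ∫ y in S, (pd1 A y * g y + A y * pd1 g y)
      = (∫ y in S, pd1 A y * g y) + ∫ y in S, A y * pd1 g y :=
    integral_add hint2.integrableOn hint1.integrableOn
  rw [hadd] at hsum
  linarith

lemma ibp2 (S : Set (ℝ × ℝ)) {A g : ℝ × ℝ → ℝ} (hA : ContDiff ℝ 1 A)
    (hg : ContDiff ℝ 1 g) (hgc : HasCompactSupport g) (hgs : tsupport g ⊆ S) :
    ∫ y in S, A y * pd2 g y = - ∫ y in S, pd2 A y * g y := by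
  have hAd : Differentiable ℝ A := hA.differentiable one_ne_zero
  have hgd : Differentiable ℝ g := hg.differentiable one_ne_zero
  have hsplit : ∀ y : ℝ × ℝ, pd2 (fun z => A z * g z) y = pd2 A y * g y + A y * pd2 g y := by
    intro y
    exact ((hasDerivAt_pd2 hAd y).mul (hasDerivAt_pd2 hgd y)).deriv
  have hvan : ∀ y : ℝ × ℝ, y ∉ S → pd2 A y * g y + A y * pd2 g y = 0 := by
    intro y hy
    have hyn : y ∉ tsupport g := fun hmem => hy (hgs hmem)
    rw [image_eq_zero_of_notMem_tsupport hyn, pd2_eq_zero_of_nmem hyn]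
    ring
  have hint1 : Integrable (fun y => A y * pd2 g y) := by
    apply (hA.continuous.mul (continuous_pd2 hg)).integrable_of_hasCompactSupport
    apply HasCompactSupport.intro hgc
    intro y hy
    simp [pd2_eq_zero_of_nmem hy]
  have hint2 : Integrable (fun y => pd2 A y * g y) := by
    apply ((continuous_pd2 hA).mul hg.continuous).integrable_of_hasCompactSupport
    apply HasCompactSupport.intro hgc
    intro y hy
    simp [image_eq_zero_of_notMem_tsupport hy]
  have hzero : ∫ y, pd2 (fun z => A z * g z) y = 0 :=
    integral_pd2_eq_zero (hA.mul hg) hgc.mul_left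
  have hsum : ∫ y in S, (pd2 A y * g y + A y * pd2 g y) = 0 := by
    rw [setIntegral_eq_integral_of_forall_compl_eq_zero hvan, ← hzero]
    exact integral_congr_ae (Filter.Eventually.of_forall fun y => (hsplit y).symm)
  have hadd : ∫ y in S, (pd2 A y * g y + A y * pd2 g y)
      = (∫ y in S, pd2 A y * g y) + ∫ y in S, A y * pd2 g y :=
    integral_add hint2.integrableOn hint1.integrableOn
  rw [hadd] at hsum
  linarith

lemma sliceB (S : Set (ℝ × ℝ)) (hSmeas : MeasurableSet S) {u₀ : ℝ × ℝ → ℝ}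
    (hu₀cont : Continuous u₀) (a b C2 : ℝ)
    (hZu : ∀ y ∈ S, |(a * y.1 - b * y.2) * u₀ y| ≤ C2)
    {g : ℝ × ℝ → ℝ} (hgcont : Continuous g) (hgc : HasCompactSupport g) :
    |∫ y in S, (a * y.1 - b * y.2) * u₀ y * g y| ≤ C2 * ∫ y in S, |g y| := by
  have hZcont : Continuous (fun y : ℝ × ℝ => a * y.1 - b * y.2) :=
    (continuous_const.mul continuous_fst).sub (continuous_const.mul continuous_snd)
  have hi : Integrable (fun y : ℝ × ℝ => (a * y.1 - b * y.2) * u₀ y * g y) := by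
    apply ((hZcont.mul hu₀cont).mul hgcont).integrable_of_hasCompactSupport
    apply HasCompactSupport.intro hgc
    intro y hy
    simp [image_eq_zero_of_notMem_tsupport hy]
  have hgabs : Integrable (fun y : ℝ × ℝ => |g y|) :=
    hgcont.abs.integrable_of_hasCompactSupport hgc.abs
  have h0 : |∫ y in S, (a * y.1 - b * y.2) * u₀ y * g y|
      ≤ ∫ y in S, |(a * y.1 - b * y.2) * u₀ y * g y| := by
    have := norm_integral_le_integral_norm
      (μ := volume.restrict S) (fun y : ℝ × ℝ => (a * y.1 - b * y.2) * u₀ y * g y)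
    simp only [Real.norm_eq_abs] at this
    exact this
  refine h0.trans ?_
  have h1 : ∫ y in S, |(a * y.1 - b * y.2) * u₀ y * g y| ≤ ∫ y in S, C2 * |g y| := by
    apply setIntegral_mono_on hi.abs.integrableOn (hgabs.const_mul C2).integrableOn hSmeas
    intro y hy
    rw [abs_mul]
    exact mul_le_mul_of_nonneg_right (hZu y hy) (abs_nonneg _)
  exact h1.trans_eq (integral_const_mul C2 fun y => |g y|)

lemma sliceA (S : Set (ℝ × ℝ)) (hSmeas : MeasurableSet S) {u₀ : ℝ × ℝ → ℝ}
    (hu₀ : ContDiff ℝ 2 u₀) (a b C3 : ℝ)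
    (hDAB : ∀ y ∈ S,
      |(a * pd1 u₀ y + (a * y.1 - b * y.2) * pd1 (fun z => pd1 u₀ z) y)
        + (-b * pd2 u₀ y + (a * y.1 - b * y.2) * pd2 (fun z => pd2 u₀ z) y)| ≤ C3)
    {g : ℝ × ℝ → ℝ} (hg : ContDiff ℝ 1 g) (hgc : HasCompactSupport g)
    (hgts : tsupport g ⊆ S) :
    |∫ y in S, (a * y.1 - b * y.2) * (pd1 u₀ y * pd1 g y + pd2 u₀ y * pd2 g y)|
      ≤ C3 * ∫ y in S, |g y| := by
  have hpd1c : ContDiff ℝ 1 (pd1 u₀) := contDiff_one_pd1 hu₀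
  have hpd2c : ContDiff ℝ 1 (pd2 u₀) := contDiff_one_pd2 hu₀
  have hZc : ContDiff ℝ 1 (fun y : ℝ × ℝ => a * y.1 - b * y.2) :=
    (contDiff_const.mul contDiff_fst).sub (contDiff_const.mul contDiff_snd)
  have hA1c : ContDiff ℝ 1 (fun y : ℝ × ℝ => (a * y.1 - b * y.2) * pd1 u₀ y) :=
    hZc.mul hpd1c
  have hA2c : ContDiff ℝ 1 (fun y : ℝ × ℝ => (a * y.1 - b * y.2) * pd2 u₀ y) :=
    hZc.mul hpd2c
  have hibp1 : ∫ y in S, ((a * y.1 - b * y.2) * pd1 u₀ y) * pd1 g y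
      = - ∫ y in S, pd1 (fun z => (a * z.1 - b * z.2) * pd1 u₀ z) y * g y :=
    ibp1 S hA1c hg hgc hgts
  have hibp2 : ∫ y in S, ((a * y.1 - b * y.2) * pd2 u₀ y) * pd2 g y
      = - ∫ y in S, pd2 (fun z => (a * z.1 - b * z.2) * pd2 u₀ z) y * g y :=
    ibp2 S hA2c hg hgc hgts
  have hpdA1 : ∀ y : ℝ × ℝ, pd1 (fun z => (a * z.1 - b * z.2) * pd1 u₀ z) y
      = a * pd1 u₀ y + (a * y.1 - b * y.2) * pd1 (fun z => pd1 u₀ z) y := by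
    intro y
    have h1 : HasDerivAt (fun t : ℝ => a * t - b * y.2) a y.1 := by
      simpa using ((hasDerivAt_id y.1).const_mul a).sub_const (b * y.2)
    have h2 : HasDerivAt (fun t : ℝ => pd1 u₀ (t, y.2)) (pd1 (fun z => pd1 u₀ z) y) y.1 :=
      hasDerivAt_pd1 (hpd1c.differentiable one_ne_zero) y
    exact (h1.mul h2).deriv
  have hpdA2 : ∀ y : ℝ × ℝ, pd2 (fun z => (a * z.1 - b * z.2) * pd2 u₀ z) y
      = -b * pd2 u₀ y + (a * y.1 - b * y.2) * pd2 (fun z => pd2 u₀ z) y := by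
    intro y
    have h1 : HasDerivAt (fun t : ℝ => a * y.1 - b * t) (-b) y.2 := by
      simpa using ((hasDerivAt_id y.2).const_mul b).const_sub (a * y.1)
    have h2 : HasDerivAt (fun t : ℝ => pd2 u₀ (y.1, t)) (pd2 (fun z => pd2 u₀ z) y) y.2 :=
      hasDerivAt_pd2 (hpd2c.differentiable one_ne_zero) y
    exact (h1.mul h2).deriv
  have hi1 : Integrable (fun y : ℝ × ℝ => ((a * y.1 - b * y.2) * pd1 u₀ y) * pd1 g y) := by
    apply (hA1c.continuous.mul (continuous_pd1 hg)).integrable_of_hasCompactSupport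
    apply HasCompactSupport.intro hgc
    intro y hy
    simp [pd1_eq_zero_of_nmem hy]
  have hi2 : Integrable (fun y : ℝ × ℝ => ((a * y.1 - b * y.2) * pd2 u₀ y) * pd2 g y) := by
    apply (hA2c.continuous.mul (continuous_pd2 hg)).integrable_of_hasCompactSupport
    apply HasCompactSupport.intro hgc
    intro y hy
    simp [pd2_eq_zero_of_nmem hy]
  have hj1 : Integrable (fun y : ℝ × ℝ =>
      pd1 (fun z => (a * z.1 - b * z.2) * pd1 u₀ z) y * g y) := by
    apply ((continuous_pd1 hA1c).mul hg.continuous).integrable_of_hasCompactSupport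
    apply HasCompactSupport.intro hgc
    intro y hy
    simp [image_eq_zero_of_notMem_tsupport hy]
  have hj2 : Integrable (fun y : ℝ × ℝ =>
      pd2 (fun z => (a * z.1 - b * z.2) * pd2 u₀ z) y * g y) := by
    apply ((continuous_pd2 hA2c).mul hg.continuous).integrable_of_hasCompactSupport
    apply HasCompactSupport.intro hgc
    intro y hy
    simp [image_eq_zero_of_notMem_tsupport hy]
  have hgabs : Integrable (fun y : ℝ × ℝ => |g y|) :=
    hg.continuous.abs.integrable_of_hasCompactSupport hgc.abs
  have hstep1 : ∫ y in S, (a * y.1 - b * y.2) * (pd1 u₀ y * pd1 g y + pd2 u₀ y * pd2 g y)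
      = (∫ y in S, ((a * y.1 - b * y.2) * pd1 u₀ y) * pd1 g y)
        + ∫ y in S, ((a * y.1 - b * y.2) * pd2 u₀ y) * pd2 g y := by
    rw [← integral_add hi1.integrableOn hi2.integrableOn]
    exact integral_congr_ae (Filter.Eventually.of_forall fun y => by ring)
  have hstep2 : (∫ y in S, pd1 (fun z => (a * z.1 - b * z.2) * pd1 u₀ z) y * g y)
      + ∫ y in S, pd2 (fun z => (a * z.1 - b * z.2) * pd2 u₀ z) y * g y
      = ∫ y in S, (pd1 (fun z => (a * z.1 - b * z.2) * pd1 u₀ z) y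
          + pd2 (fun z => (a * z.1 - b * z.2) * pd2 u₀ z) y) * g y := by
    rw [← integral_add hj1.integrableOn hj2.integrableOn]
    exact integral_congr_ae (Filter.Eventually.of_forall fun y => by ring)
  have htotal : ∫ y in S, (a * y.1 - b * y.2) * (pd1 u₀ y * pd1 g y + pd2 u₀ y * pd2 g y)
      = - ∫ y in S, (pd1 (fun z => (a * z.1 - b * z.2) * pd1 u₀ z) y
          + pd2 (fun z => (a * z.1 - b * z.2) * pd2 u₀ z) y) * g y := by
    rw [hstep1, hibp1, hibp2, ← hstep2]
    ring
  rw [htotal, abs_neg]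
  have hsum : Integrable (fun y : ℝ × ℝ =>
      (pd1 (fun z => (a * z.1 - b * z.2) * pd1 u₀ z) y
        + pd2 (fun z => (a * z.1 - b * z.2) * pd2 u₀ z) y) * g y) := by
    have := hj1.add hj2
    exact this.congr (Filter.Eventually.of_forall fun y => by
      simp only [Pi.add_apply]; ring)
  have h0 : |∫ y in S, (pd1 (fun z => (a * z.1 - b * z.2) * pd1 u₀ z) y
        + pd2 (fun z => (a * z.1 - b * z.2) * pd2 u₀ z) y) * g y|
      ≤ ∫ y in S, |(pd1 (fun z => (a * z.1 - b * z.2) * pd1 u₀ z) y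
        + pd2 (fun z => (a * z.1 - b * z.2) * pd2 u₀ z) y) * g y| := by
    have := norm_integral_le_integral_norm
      (μ := volume.restrict S) (fun y : ℝ × ℝ =>
        (pd1 (fun z => (a * z.1 - b * z.2) * pd1 u₀ z) y
          + pd2 (fun z => (a * z.1 - b * z.2) * pd2 u₀ z) y) * g y)
    simp only [Real.norm_eq_abs] at this
    exact this
  refine h0.trans ?_
  have h1 : ∫ y in S, |(pd1 (fun z => (a * z.1 - b * z.2) * pd1 u₀ z) y
        + pd2 (fun z => (a * z.1 - b * z.2) * pd2 u₀ z) y) * g y|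
      ≤ ∫ y in S, C3 * |g y| := by
    apply setIntegral_mono_on hsum.abs.integrableOn (hgabs.const_mul C3).integrableOn hSmeas
    intro y hy
    rw [abs_mul, hpdA1 y, hpdA2 y]
    exact mul_le_mul_of_nonneg_right (hDAB y hy) (abs_nonneg _)
  exact h1.trans_eq (integral_const_mul C3 fun y => |g y|)


set_option maxHeartbeats 2000000 in
/-- Estimate of the cross term `m_ε⁵(wu₀, η)` in the proof of the dimensional-reduction
theorem: if `u₀` is `C²` with `u₀`, `∇u₀` and the second derivatives of `u₀` bounded on
`S`, `|k| ≤ K₀` and `0 < m ≤ h ≤ M` on `I`, and `λ₀ ≥ 0`, then there is `C₁₂ > 0` with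
`|m_ε⁵(wu₀,η)| ≤ (C₁₂/ε) ‖w‖ ‖η‖` for all `ε > 0` and all smooth compactly supported
`w` on `I°` and `η` on `I° × S`. -/
theorem cross_term_m5_estimate
    (S : Set (ℝ × ℝ)) (hSopen : IsOpen S) (hSbdd : Bornology.IsBounded S)
    (hSne : S.Nonempty)
    (I : Set ℝ) (hI : I.OrdConnected)
    (u₀ : ℝ × ℝ → ℝ) (hu₀ : ContDiff ℝ 2 u₀)
    (hu₀bdd : ∃ C : ℝ, ∀ y ∈ S, |u₀ y| ≤ C ∧ |pd1 u₀ y| ≤ C ∧ |pd2 u₀ y| ≤ C ∧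
        |pd1 (fun z => pd1 u₀ z) y| ≤ C ∧ |pd2 (fun z => pd1 u₀ z) y| ≤ C ∧
        |pd1 (fun z => pd2 u₀ z) y| ≤ C ∧ |pd2 (fun z => pd2 u₀ z) y| ≤ C)
    (k : ℝ → ℝ) (hkmeas : Measurable k)
    (K₀ m M lam0 : ℝ) (hK₀ : ∀ s ∈ I, |k s| ≤ K₀)
    (h : ℝ → ℝ) (hm : 0 < m) (hh : ∀ s ∈ I, m ≤ h s ∧ h s ≤ M)
    (hlam0 : 0 ≤ lam0)
    (α : ℝ → ℝ) :
    ∃ C₁₂ > 0, ∀ ε : ℝ, 0 < ε →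
      ∀ w : ℝ → ℝ, ContDiff ℝ (⊤ : ℕ∞) w → HasCompactSupport w → tsupport w ⊆ interior I →
      ∀ η : ℝ × ℝ × ℝ → ℝ, ContDiff ℝ (⊤ : ℕ∞) η → HasCompactSupport η →
        tsupport η ⊆ (interior I) ×ˢ S →
        |∫ p in (I ×ˢ S : Set (ℝ × ℝ × ℝ)),
            (1 / ε) * (k p.1 * h p.1) *
              (Real.cos (α p.1) * p.2.1 - Real.sin (α p.1) * p.2.2) * w p.1 *
              ((pd1 u₀ p.2 * d1 η p + pd2 u₀ p.2 * d2 η p) / (h p.1) ^ 2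
                - lam0 * u₀ p.2 * η p / M ^ 2)| ≤
          (C₁₂ / ε) * Real.sqrt (∫ s in I, (w s) ^ 2) *
            Real.sqrt (∫ p in (I ×ˢ S : Set (ℝ × ℝ × ℝ)), (η p) ^ 2) := by
  obtain ⟨C, hC⟩ := hu₀bdd
  obtain ⟨y₀, hy₀⟩ := hSne
  have hC0 : 0 ≤ C := le_trans (abs_nonneg _) (hC y₀ hy₀).1
  obtain ⟨R, hR⟩ := (Metric.isBounded_iff_subset_closedBall (0 : ℝ × ℝ)).mp hSbdd
  have hnormR : ∀ y ∈ S, ‖y‖ ≤ R := by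
    intro y hy
    have := hR hy
    rwa [mem_closedBall_zero_iff] at this
  have hR0 : 0 ≤ R := le_trans (norm_nonneg y₀) (hnormR y₀ hy₀)
  have hImeas : MeasurableSet I := hI.measurableSet
  have hSmeas : MeasurableSet S := hSopen.measurableSet
  set C3 : ℝ := 2 * (C + 2 * R * C) with hC3def
  set C2 : ℝ := 2 * R * C with hC2def
  have hRC : 0 ≤ R * C := mul_nonneg hR0 hC0
  have hC30 : 0 ≤ C3 := by rw [hC3def]; nlinarith
  have hC20 : 0 ≤ C2 := by rw [hC2def]; nlinarith
  set B : ℝ := |K₀| * |M| * (C3 + lam0 * C2) / m ^ 2 with hBdef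
  have hB0 : 0 ≤ B := by
    rw [hBdef]
    have h1 : 0 ≤ C3 + lam0 * C2 := by nlinarith [mul_nonneg hlam0 hC20]
    exact div_nonneg (mul_nonneg (mul_nonneg (abs_nonneg _) (abs_nonneg _)) h1) (by positivity)
  have hBs0 : 0 ≤ B * Real.sqrt (volume S).toReal :=
    mul_nonneg hB0 (Real.sqrt_nonneg _)
  refine ⟨B * Real.sqrt (volume S).toReal + 1, by linarith, ?_⟩
  intro ε hε w hw hwc hwsupp η hη hηc hηsupp
  have h1ε : (0:ℝ) < 1 / ε := by positivity
  have hρ : ((volume : Measure ℝ).restrict I).prod ((volume : Measure (ℝ × ℝ)).restrict S)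
      = (volume : Measure (ℝ × ℝ × ℝ)).restrict (I ×ˢ S) := by
    rw [Measure.prod_restrict, ← Measure.volume_eq_prod]
  haveI : IsFiniteMeasure ((volume : Measure (ℝ × ℝ)).restrict S) := by
    constructor
    rw [Measure.restrict_apply_univ]
    exact hSbdd.measure_lt_top
  set F : ℝ × ℝ × ℝ → ℝ := fun p =>
    (1 / ε) * (k p.1 * h p.1) *
      (Real.cos (α p.1) * p.2.1 - Real.sin (α p.1) * p.2.2) * w p.1 *
      ((pd1 u₀ p.2 * d1 η p + pd2 u₀ p.2 * d2 η p) / (h p.1) ^ 2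
        - lam0 * u₀ p.2 * η p / M ^ 2) with hFdef
  -- the key slice estimate
  have hkey : ∀ s ∈ I,
      |∫ y : ℝ × ℝ in S, F (s, y)|
        ≤ 1 / ε * B * (|w s| * ∫ y : ℝ × ℝ in S, |η (s, y)|) := by
    intro s hs
    have hks := hK₀ s hs
    have hhs := hh s hs
    have hhs0 : 0 < h s := lt_of_lt_of_le hm hhs.1
    have hMm : m ≤ M := le_trans hhs.1 hhs.2
    have hM0 : 0 < M := lt_of_lt_of_le hm hMm
    -- slice function facts
    have hgsmooth : ContDiff ℝ 1 (fun y : ℝ × ℝ => η (s, y)) :=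
      (hη.comp (contDiff_const.prodMk contDiff_id)).of_le (by simp)
    have hgsupp : Function.support (fun y : ℝ × ℝ => η (s, y)) ⊆ Prod.snd '' tsupport η := by
      intro y hy
      exact ⟨(s, y), subset_tsupport η hy, rfl⟩
    have hK2cpt : IsCompact (Prod.snd '' tsupport η) := hηc.image continuous_snd
    have hK2S : Prod.snd '' tsupport η ⊆ S := by
      rintro _ ⟨p, hp, rfl⟩
      exact (hηsupp hp).2
    have hgc : HasCompactSupport (fun y : ℝ × ℝ => η (s, y)) := by
      apply HasCompactSupport.intro hK2cpt
      intro y hy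
      by_contra hne
      exact hy (hgsupp hne)
    have hgts : tsupport (fun y : ℝ × ℝ => η (s, y)) ⊆ S :=
      (closure_minimal hgsupp hK2cpt.isClosed).trans hK2S
    -- bound on the angular factor
    have hzb : ∀ y ∈ S, |Real.cos (α s) * y.1 - Real.sin (α s) * y.2| ≤ 2 * R := by
      intro y hy
      have hy1 : |y.1| ≤ R := by
        calc |y.1| = ‖y.1‖ := (Real.norm_eq_abs _).symm
          _ ≤ ‖y‖ := norm_fst_le y
          _ ≤ R := hnormR y hy
      have hy2 : |y.2| ≤ R := by
        calc |y.2| = ‖y.2‖ := (Real.norm_eq_abs _).symm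
          _ ≤ ‖y‖ := norm_snd_le y
          _ ≤ R := hnormR y hy
      have e1 : |Real.cos (α s) * y.1| ≤ R := by
        rw [abs_mul]
        calc |Real.cos (α s)| * |y.1| ≤ 1 * R :=
              mul_le_mul (Real.abs_cos_le_one _) hy1 (abs_nonneg _) zero_le_one
          _ = R := one_mul R
      have e2 : |Real.sin (α s) * y.2| ≤ R := by
        rw [abs_mul]
        calc |Real.sin (α s)| * |y.2| ≤ 1 * R :=
              mul_le_mul (Real.abs_sin_le_one _) hy2 (abs_nonneg _) zero_le_one
          _ = R := one_mul R
      calc |Real.cos (α s) * y.1 - Real.sin (α s) * y.2|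
          ≤ |Real.cos (α s) * y.1| + |Real.sin (α s) * y.2| := abs_sub _ _
        _ ≤ 2 * R := by linarith
    -- bound for the integrated-by-parts coefficient
    have hDAB : ∀ y ∈ S,
        |(Real.cos (α s) * pd1 u₀ y
            + (Real.cos (α s) * y.1 - Real.sin (α s) * y.2) * pd1 (fun z => pd1 u₀ z) y)
          + (-Real.sin (α s) * pd2 u₀ y
            + (Real.cos (α s) * y.1 - Real.sin (α s) * y.2) * pd2 (fun z => pd2 u₀ z) y)|
          ≤ C3 := by
      intro y hy
      obtain ⟨hb0, hb1, hb2, hb3, hb4, hb5, hb6⟩ := hC y hy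
      have hz := hzb y hy
      have e1 : |Real.cos (α s) * pd1 u₀ y| ≤ C := by
        rw [abs_mul]
        calc |Real.cos (α s)| * |pd1 u₀ y| ≤ 1 * C :=
              mul_le_mul (Real.abs_cos_le_one _) hb1 (abs_nonneg _) zero_le_one
          _ = C := one_mul C
      have e2 : |(Real.cos (α s) * y.1 - Real.sin (α s) * y.2) * pd1 (fun z => pd1 u₀ z) y|
          ≤ 2 * R * C := by
        rw [abs_mul]
        exact mul_le_mul hz hb3 (abs_nonneg _) (by positivity)
      have e3 : |-Real.sin (α s) * pd2 u₀ y| ≤ C := by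
        rw [neg_mul, abs_neg, abs_mul]
        calc |Real.sin (α s)| * |pd2 u₀ y| ≤ 1 * C :=
              mul_le_mul (Real.abs_sin_le_one _) hb2 (abs_nonneg _) zero_le_one
          _ = C := one_mul C
      have e4 : |(Real.cos (α s) * y.1 - Real.sin (α s) * y.2) * pd2 (fun z => pd2 u₀ z) y|
          ≤ 2 * R * C := by
        rw [abs_mul]
        exact mul_le_mul hz hb6 (abs_nonneg _) (by positivity)
      have t1 := abs_add_le (Real.cos (α s) * pd1 u₀ y)
        ((Real.cos (α s) * y.1 - Real.sin (α s) * y.2) * pd1 (fun z => pd1 u₀ z) y)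
      have t2 := abs_add_le (-Real.sin (α s) * pd2 u₀ y)
        ((Real.cos (α s) * y.1 - Real.sin (α s) * y.2) * pd2 (fun z => pd2 u₀ z) y)
      have t3 := abs_add_le
        (Real.cos (α s) * pd1 u₀ y
          + (Real.cos (α s) * y.1 - Real.sin (α s) * y.2) * pd1 (fun z => pd1 u₀ z) y)
        (-Real.sin (α s) * pd2 u₀ y
          + (Real.cos (α s) * y.1 - Real.sin (α s) * y.2) * pd2 (fun z => pd2 u₀ z) y)
      rw [hC3def]
      linarith
    -- the two slice estimates
    have hA' : |∫ y : ℝ × ℝ in S, (Real.cos (α s) * y.1 - Real.sin (α s) * y.2)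
          * (pd1 u₀ y * d1 η (s, y) + pd2 u₀ y * d2 η (s, y))|
        ≤ C3 * ∫ y : ℝ × ℝ in S, |η (s, y)| :=
      sliceA S hSmeas hu₀ (Real.cos (α s)) (Real.sin (α s)) C3 hDAB hgsmooth hgc hgts
    have hB' : |∫ y : ℝ × ℝ in S, (Real.cos (α s) * y.1 - Real.sin (α s) * y.2)
          * u₀ y * η (s, y)|
        ≤ C2 * ∫ y : ℝ × ℝ in S, |η (s, y)| := by
      refine sliceB S hSmeas hu₀.continuous (Real.cos (α s)) (Real.sin (α s)) C2 ?_
        hgsmooth.continuous hgc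
      intro y hy
      rw [abs_mul, hC2def]
      exact mul_le_mul (hzb y hy) (hC y hy).1 (abs_nonneg _) (by positivity)
    -- integrability of the two slice integrands
    have hZcont : Continuous (fun y : ℝ × ℝ => Real.cos (α s) * y.1 - Real.sin (α s) * y.2) :=
      (continuous_const.mul continuous_fst).sub (continuous_const.mul continuous_snd)
    have hcontA : Continuous (fun y : ℝ × ℝ =>
        (Real.cos (α s) * y.1 - Real.sin (α s) * y.2)
          * (pd1 u₀ y * d1 η (s, y) + pd2 u₀ y * d2 η (s, y))) :=
      hZcont.mul (((continuous_pd1 (hu₀.of_le one_le_two)).mul (continuous_pd1 hgsmooth)).add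
        ((continuous_pd2 (hu₀.of_le one_le_two)).mul (continuous_pd2 hgsmooth)))
    have hintA : Integrable (fun y : ℝ × ℝ =>
        (Real.cos (α s) * y.1 - Real.sin (α s) * y.2)
          * (pd1 u₀ y * d1 η (s, y) + pd2 u₀ y * d2 η (s, y))) (volume.restrict S) := by
      refine (hcontA.integrable_of_hasCompactSupport ?_).restrict
      apply HasCompactSupport.intro hgc
      intro y hy
      have e1 : pd1 (fun y : ℝ × ℝ => η (s, y)) y = 0 := pd1_eq_zero_of_nmem hy
      have e2 : pd2 (fun y : ℝ × ℝ => η (s, y)) y = 0 := pd2_eq_zero_of_nmem hy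
      show (Real.cos (α s) * y.1 - Real.sin (α s) * y.2)
          * (pd1 u₀ y * pd1 (fun y : ℝ × ℝ => η (s, y)) y
            + pd2 u₀ y * pd2 (fun y : ℝ × ℝ => η (s, y)) y) = 0
      rw [e1, e2]
      ring
    have hintB : Integrable (fun y : ℝ × ℝ =>
        (Real.cos (α s) * y.1 - Real.sin (α s) * y.2) * u₀ y * η (s, y))
        (volume.restrict S) := by
      refine (((hZcont.mul hu₀.continuous).mul
        hgsmooth.continuous).integrable_of_hasCompactSupport ?_).restrict
      apply HasCompactSupport.intro hgc
      intro y hy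
      have e3 : η (s, y) = 0 :=
        image_eq_zero_of_notMem_tsupport (f := fun y : ℝ × ℝ => η (s, y)) hy
      show (Real.cos (α s) * y.1 - Real.sin (α s) * y.2) * u₀ y * η (s, y) = 0
      rw [e3]
      ring
    -- rearrange the inner integral
    have hconv : (∫ y : ℝ × ℝ in S, F (s, y))
        = (1 / ε * (k s * h s) * w s) *
          ((h s ^ 2)⁻¹ * (∫ y : ℝ × ℝ in S, (Real.cos (α s) * y.1 - Real.sin (α s) * y.2)
              * (pd1 u₀ y * d1 η (s, y) + pd2 u₀ y * d2 η (s, y)))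
            - lam0 / M ^ 2 * ∫ y : ℝ × ℝ in S, (Real.cos (α s) * y.1 - Real.sin (α s) * y.2)
              * u₀ y * η (s, y)) := by
      have e1 : (∫ y : ℝ × ℝ in S, F (s, y))
          = ∫ y : ℝ × ℝ in S, (1 / ε * (k s * h s) * w s) *
              ((h s ^ 2)⁻¹ * ((Real.cos (α s) * y.1 - Real.sin (α s) * y.2)
                  * (pd1 u₀ y * d1 η (s, y) + pd2 u₀ y * d2 η (s, y)))
                - lam0 / M ^ 2 * ((Real.cos (α s) * y.1 - Real.sin (α s) * y.2)
                  * u₀ y * η (s, y))) := by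
        refine integral_congr_ae (Filter.Eventually.of_forall fun y => ?_)
        show (1 / ε) * (k s * h s) *
            (Real.cos (α s) * y.1 - Real.sin (α s) * y.2) * w s *
            ((pd1 u₀ y * d1 η (s, y) + pd2 u₀ y * d2 η (s, y)) / (h s) ^ 2
              - lam0 * u₀ y * η (s, y) / M ^ 2) = _
        ring
      rw [e1, integral_const_mul, integral_sub (hintA.const_mul _) (hintB.const_mul _),
        integral_const_mul, integral_const_mul]
    rw [hconv]
    have hY0 : 0 ≤ ∫ y : ℝ × ℝ in S, |η (s, y)| := integral_nonneg fun y => abs_nonneg _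
    have hc1 : |1 / ε * (k s * h s) * w s| ≤ 1 / ε * (|K₀| * |M|) * |w s| := by
      rw [abs_mul, abs_mul]
      have h1 : |1 / ε| = 1 / ε := abs_of_pos h1ε
      have h2 : |k s * h s| ≤ |K₀| * |M| := by
        rw [abs_mul]
        apply mul_le_mul (le_trans hks (le_abs_self K₀)) ?_ (abs_nonneg _) (abs_nonneg _)
        rw [abs_of_pos hhs0]
        exact le_trans hhs.2 (le_abs_self M)
      rw [h1]
      exact mul_le_mul_of_nonneg_right (mul_le_mul_of_nonneg_left h2 h1ε.le) (abs_nonneg _)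
    have ht2 : (h s ^ 2)⁻¹ ≤ (m ^ 2)⁻¹ := by
      apply inv_anti₀ (by positivity)
      nlinarith [hhs.1, hm.le]
    have ht3 : lam0 / M ^ 2 ≤ lam0 / m ^ 2 := by
      apply div_le_div_of_nonneg_left hlam0 (by positivity)
      nlinarith
    have u1 : |(h s ^ 2)⁻¹ * ∫ y : ℝ × ℝ in S, (Real.cos (α s) * y.1 - Real.sin (α s) * y.2)
          * (pd1 u₀ y * d1 η (s, y) + pd2 u₀ y * d2 η (s, y))|
        ≤ (m ^ 2)⁻¹ * (C3 * ∫ y : ℝ × ℝ in S, |η (s, y)|) := by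
      rw [abs_mul, abs_of_pos (by positivity : (0:ℝ) < (h s ^ 2)⁻¹)]
      exact mul_le_mul ht2 hA' (abs_nonneg _) (by positivity)
    have u2 : |lam0 / M ^ 2 * ∫ y : ℝ × ℝ in S, (Real.cos (α s) * y.1 - Real.sin (α s) * y.2)
          * u₀ y * η (s, y)|
        ≤ lam0 / m ^ 2 * (C2 * ∫ y : ℝ × ℝ in S, |η (s, y)|) := by
      rw [abs_mul, abs_of_nonneg (div_nonneg hlam0 (by positivity : (0:ℝ) ≤ M ^ 2))]
      exact mul_le_mul ht3 hB' (abs_nonneg _) (div_nonneg hlam0 (by positivity))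
    have hinner : |(h s ^ 2)⁻¹ * (∫ y : ℝ × ℝ in S,
            (Real.cos (α s) * y.1 - Real.sin (α s) * y.2)
              * (pd1 u₀ y * d1 η (s, y) + pd2 u₀ y * d2 η (s, y)))
          - lam0 / M ^ 2 * ∫ y : ℝ × ℝ in S,
            (Real.cos (α s) * y.1 - Real.sin (α s) * y.2) * u₀ y * η (s, y)|
        ≤ (m ^ 2)⁻¹ * (C3 * ∫ y : ℝ × ℝ in S, |η (s, y)|)
          + lam0 / m ^ 2 * (C2 * ∫ y : ℝ × ℝ in S, |η (s, y)|) := by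
      refine le_trans (abs_sub _ _) ?_
      exact add_le_add u1 u2
    calc |(1 / ε * (k s * h s) * w s) * ((h s ^ 2)⁻¹ * (∫ y : ℝ × ℝ in S,
            (Real.cos (α s) * y.1 - Real.sin (α s) * y.2)
              * (pd1 u₀ y * d1 η (s, y) + pd2 u₀ y * d2 η (s, y)))
          - lam0 / M ^ 2 * ∫ y : ℝ × ℝ in S,
            (Real.cos (α s) * y.1 - Real.sin (α s) * y.2) * u₀ y * η (s, y))|
        = |1 / ε * (k s * h s) * w s| * |(h s ^ 2)⁻¹ * (∫ y : ℝ × ℝ in S,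
            (Real.cos (α s) * y.1 - Real.sin (α s) * y.2)
              * (pd1 u₀ y * d1 η (s, y) + pd2 u₀ y * d2 η (s, y)))
          - lam0 / M ^ 2 * ∫ y : ℝ × ℝ in S,
            (Real.cos (α s) * y.1 - Real.sin (α s) * y.2) * u₀ y * η (s, y)| := abs_mul _ _
      _ ≤ (1 / ε * (|K₀| * |M|) * |w s|) *
            ((m ^ 2)⁻¹ * (C3 * ∫ y : ℝ × ℝ in S, |η (s, y)|)
              + lam0 / m ^ 2 * (C2 * ∫ y : ℝ × ℝ in S, |η (s, y)|)) := by
          apply mul_le_mul hc1 hinner (abs_nonneg _)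
          have : (0:ℝ) ≤ 1 / ε * (|K₀| * |M|) :=
            mul_nonneg h1ε.le (mul_nonneg (abs_nonneg _) (abs_nonneg _))
          exact mul_nonneg this (abs_nonneg _)
      _ = 1 / ε * B * (|w s| * ∫ y : ℝ × ℝ in S, |η (s, y)|) := by
          rw [hBdef]
          ring
  -- global auxiliary integrable majorant
  have hG2cont : Continuous (fun p : ℝ × ℝ × ℝ => 1 / ε * B * (|w p.1| * |η p|)) :=
    continuous_const.mul (((hw.continuous.comp continuous_fst).abs).mul hη.continuous.abs)
  have hG2cs : HasCompactSupport (fun p : ℝ × ℝ × ℝ => 1 / ε * B * (|w p.1| * |η p|)) := by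
    apply HasCompactSupport.intro hηc
    intro p hp
    simp [image_eq_zero_of_notMem_tsupport hp]
  have hG2int : Integrable (fun p : ℝ × ℝ × ℝ => 1 / ε * B * (|w p.1| * |η p|))
      (((volume : Measure ℝ).restrict I).prod ((volume : Measure (ℝ × ℝ)).restrict S)) := by
    rw [hρ]
    exact (hG2cont.integrable_of_hasCompactSupport hG2cs).restrict
  have hginner : (fun s => ∫ y : ℝ × ℝ in S, 1 / ε * B * (|w s| * |η (s, y)|))
      = fun s => 1 / ε * B * (|w s| * ∫ y : ℝ × ℝ in S, |η (s, y)|) := by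
    funext s
    have e : (fun y : ℝ × ℝ => 1 / ε * B * (|w s| * |η (s, y)|))
        = fun y : ℝ × ℝ => (1 / ε * B * |w s|) * |η (s, y)| := funext fun y => by ring
    rw [e, integral_const_mul]
    ring
  rw [← hρ]
  by_cases hT : Integrable F
      (((volume : Measure ℝ).restrict I).prod ((volume : Measure (ℝ × ℝ)).restrict S))
  swap
  · rw [integral_undef hT, abs_zero]
    have h1 : 0 ≤ (B * Real.sqrt (volume S).toReal + 1) / ε := by
      apply div_nonneg _ hε.le
      linarith
    exact mul_nonneg (mul_nonneg h1 (Real.sqrt_nonneg _)) (Real.sqrt_nonneg _)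
  · have step1 : |∫ p, F p ∂(((volume : Measure ℝ).restrict I).prod
          ((volume : Measure (ℝ × ℝ)).restrict S))|
        ≤ ∫ s, |∫ y : ℝ × ℝ in S, F (s, y)| ∂((volume : Measure ℝ).restrict I) := by
      rw [integral_prod _ hT]
      have := norm_integral_le_integral_norm (μ := (volume : Measure ℝ).restrict I)
        (fun s => ∫ y : ℝ × ℝ in S, F (s, y))
      simpa [Real.norm_eq_abs] using this
    have step2 : ∫ s, |∫ y : ℝ × ℝ in S, F (s, y)| ∂((volume : Measure ℝ).restrict I)
        ≤ ∫ s, 1 / ε * B * (|w s| * ∫ y : ℝ × ℝ in S, |η (s, y)|)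
            ∂((volume : Measure ℝ).restrict I) := by
      apply integral_mono_of_nonneg (Filter.Eventually.of_forall fun s => abs_nonneg _)
      · rw [← hginner]
        exact hG2int.integral_prod_left
      · filter_upwards [ae_restrict_mem hImeas] with s hs
        exact hkey s hs
    have step3 : ∫ s, 1 / ε * B * (|w s| * ∫ y : ℝ × ℝ in S, |η (s, y)|)
          ∂((volume : Measure ℝ).restrict I)
        = ∫ p, 1 / ε * B * (|w p.1| * |η p|) ∂(((volume : Measure ℝ).restrict I).prod
            ((volume : Measure (ℝ × ℝ)).restrict S)) := by
      rw [integral_prod _ hG2int]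
      exact integral_congr_ae (Filter.Eventually.of_forall fun s => (congrFun hginner s).symm)
    have step4 : ∫ p, 1 / ε * B * (|w p.1| * |η p|) ∂(((volume : Measure ℝ).restrict I).prod
            ((volume : Measure (ℝ × ℝ)).restrict S))
        = 1 / ε * B * ∫ p, |w p.1| * |η p| ∂(((volume : Measure ℝ).restrict I).prod
            ((volume : Measure (ℝ × ℝ)).restrict S)) := integral_const_mul _ _
    -- Cauchy-Schwarz
    have hwsqI : Integrable (fun s => w s ^ 2) ((volume : Measure ℝ).restrict I) := by
      have hcs : HasCompactSupport (fun s => w s ^ 2) := by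
        apply HasCompactSupport.intro hwc
        intro s hs
        simp [image_eq_zero_of_notMem_tsupport hs]
      exact ((hw.continuous.pow 2).integrable_of_hasCompactSupport hcs).restrict
    have hη2 : Integrable (fun p : ℝ × ℝ × ℝ => η p ^ 2)
        (((volume : Measure ℝ).restrict I).prod ((volume : Measure (ℝ × ℝ)).restrict S)) := by
      rw [hρ]
      have hcs : HasCompactSupport (fun p : ℝ × ℝ × ℝ => η p ^ 2) := by
        apply HasCompactSupport.intro hηc
        intro p hp
        simp [image_eq_zero_of_notMem_tsupport hp]
      exact ((hη.continuous.pow 2).integrable_of_hasCompactSupport hcs).restrict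
    have hwprod : Integrable (fun p : ℝ × ℝ × ℝ => |w p.1| ^ 2)
        (((volume : Measure ℝ).restrict I).prod ((volume : Measure (ℝ × ℝ)).restrict S)) := by
      have h1 := hwsqI.mul_prod (integrable_const (1:ℝ)
        (μ := (volume : Measure (ℝ × ℝ)).restrict S))
      simpa [sq_abs] using h1
    have hm1 : MemLp (fun p : ℝ × ℝ × ℝ => |w p.1|) 2
        (((volume : Measure ℝ).restrict I).prod ((volume : Measure (ℝ × ℝ)).restrict S)) :=
      (memLp_two_iff_integrable_sq
        ((hw.continuous.comp continuous_fst).abs.aestronglyMeasurable)).mpr hwprod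
    have hm2 : MemLp (fun p : ℝ × ℝ × ℝ => |η p|) 2
        (((volume : Measure ℝ).restrict I).prod ((volume : Measure (ℝ × ℝ)).restrict S)) :=
      (memLp_two_iff_integrable_sq (hη.continuous.abs.aestronglyMeasurable)).mpr
        (by simpa [sq_abs] using hη2)
    have hconj : Real.HolderConjugate 2 2 := Real.HolderConjugate.two_two
    have hofreal : ENNReal.ofReal (2:ℝ) = 2 := by norm_num
    have hCS := integral_mul_le_Lp_mul_Lq_of_nonneg hconj
      (Filter.Eventually.of_forall fun p : ℝ × ℝ × ℝ => abs_nonneg (w p.1))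
      (Filter.Eventually.of_forall fun p : ℝ × ℝ × ℝ => abs_nonneg (η p))
      (hofreal.symm ▸ hm1) (hofreal.symm ▸ hm2)
    have hrpow : ∀ x : ℝ, x ^ (2:ℝ) = x ^ 2 := fun x => by
      rw [show (2:ℝ) = ((2:ℕ):ℝ) by norm_num, Real.rpow_natCast]
    have hc1 : ∫ p, |w p.1| ^ (2:ℝ) ∂(((volume : Measure ℝ).restrict I).prod
            ((volume : Measure (ℝ × ℝ)).restrict S))
        = (∫ s in I, w s ^ 2) * (volume S).toReal := by
      have e : (fun p : ℝ × ℝ × ℝ => |w p.1| ^ (2:ℝ))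
          = fun p : ℝ × ℝ × ℝ => (fun s => w s ^ 2) p.1 * (fun _ : ℝ × ℝ => (1:ℝ)) p.2 := by
        funext p
        simp [hrpow, sq_abs]
      rw [e, integral_prod_mul (fun s : ℝ => w s ^ 2) (fun _ : ℝ × ℝ => (1:ℝ))]
      simp [Measure.restrict_apply_univ, measureReal_def]
    have hc2 : ∫ p, |η p| ^ (2:ℝ) ∂(((volume : Measure ℝ).restrict I).prod
            ((volume : Measure (ℝ × ℝ)).restrict S))
        = ∫ p, η p ^ 2 ∂(((volume : Measure ℝ).restrict I).prod
            ((volume : Measure (ℝ × ℝ)).restrict S)) :=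
      integral_congr_ae (Filter.Eventually.of_forall fun p => by simp [hrpow, sq_abs])
    rw [hc1, hc2, ← Real.sqrt_eq_rpow, ← Real.sqrt_eq_rpow,
      Real.sqrt_mul (integral_nonneg fun s => sq_nonneg (w s))] at hCS
    calc |∫ p, F p ∂(((volume : Measure ℝ).restrict I).prod
            ((volume : Measure (ℝ × ℝ)).restrict S))|
        ≤ ∫ s, |∫ y : ℝ × ℝ in S, F (s, y)| ∂((volume : Measure ℝ).restrict I) := step1
      _ ≤ ∫ s, 1 / ε * B * (|w s| * ∫ y : ℝ × ℝ in S, |η (s, y)|)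
            ∂((volume : Measure ℝ).restrict I) := step2
      _ = 1 / ε * B * ∫ p, |w p.1| * |η p| ∂(((volume : Measure ℝ).restrict I).prod
            ((volume : Measure (ℝ × ℝ)).restrict S)) := by rw [step3, step4]
      _ ≤ 1 / ε * B * (Real.sqrt (∫ s in I, w s ^ 2) * Real.sqrt (volume S).toReal
            * Real.sqrt (∫ p, η p ^ 2 ∂(((volume : Measure ℝ).restrict I).prod
              ((volume : Measure (ℝ × ℝ)).restrict S)))) := by
          apply mul_le_mul_of_nonneg_left _ (mul_nonneg h1ε.le hB0)
          calc ∫ p, |w p.1| * |η p| ∂(((volume : Measure ℝ).restrict I).prod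
                ((volume : Measure (ℝ × ℝ)).restrict S)) ≤ _ := hCS
            _ = Real.sqrt (∫ s in I, w s ^ 2) * Real.sqrt (volume S).toReal
                * Real.sqrt (∫ p, η p ^ 2 ∂(((volume : Measure ℝ).restrict I).prod
                  ((volume : Measure (ℝ × ℝ)).restrict S))) := rfl
      _ ≤ (B * Real.sqrt (volume S).toReal + 1) / ε * Real.sqrt (∫ s in I, w s ^ 2)
            * Real.sqrt (∫ p, η p ^ 2 ∂(((volume : Measure ℝ).restrict I).prod
              ((volume : Measure (ℝ × ℝ)).restrict S))) := by
          have hle : B * Real.sqrt (volume S).toReal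
              ≤ B * Real.sqrt (volume S).toReal + 1 := by linarith
          have heq1 : 1 / ε * B * (Real.sqrt (∫ s in I, w s ^ 2)
                * Real.sqrt (volume S).toReal
                * Real.sqrt (∫ p, η p ^ 2 ∂(((volume : Measure ℝ).restrict I).prod
                  ((volume : Measure (ℝ × ℝ)).restrict S))))
              = (B * Real.sqrt (volume S).toReal) / ε * (Real.sqrt (∫ s in I, w s ^ 2)
                * Real.sqrt (∫ p, η p ^ 2 ∂(((volume : Measure ℝ).restrict I).prod
                  ((volume : Measure (ℝ × ℝ)).restrict S)))) := by ring
          have heq2 : (B * Real.sqrt (volume S).toReal + 1) / ε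
                * Real.sqrt (∫ s in I, w s ^ 2)
                * Real.sqrt (∫ p, η p ^ 2 ∂(((volume : Measure ℝ).restrict I).prod
                  ((volume : Measure (ℝ × ℝ)).restrict S)))
              = (B * Real.sqrt (volume S).toReal + 1) / ε * (Real.sqrt (∫ s in I, w s ^ 2)
                * Real.sqrt (∫ p, η p ^ 2 ∂(((volume : Measure ℝ).restrict I).prod
                  ((volume : Measure (ℝ × ℝ)).restrict S)))) := by ring
          rw [heq1, heq2]
          apply mul_le_mul_of_nonneg_right _
            (mul_nonneg (Real.sqrt_nonneg _) (Real.sqrt_nonneg _))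
          exact (div_le_div_iff_of_pos_right hε).mpr hle
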